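/- Let u : ℝ × ℝ → ℝ be smooth and positive. If ψ(t,x) = -2 μ^(-1/2) (∂ₓ u / u)(t,x) satisfies the Burgers equation ∂ₜ ψ + ψ ∂ₓ ψ = μ^(-1/2) ∂ₓ² ψ, then u² · (∂ₜψ + ψ∂ₓψ - μ^(-1/2)∂ₓ²ψ) equals μ^(1/2)(u · ∂ₓ(∂ₜu - μ^(-1/2)∂ₓ²u) - (∂ₓu)·(∂ₜu - μ^(-1/2)∂ₓ²u)) up to the factor 2μ^(-1/2); in particular the quotient g := (∂ₜ u - μ^(-1/2) ∂ₓ² u)/u satisfies ∂ₓ g = 0. -/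

import Mathlib

private lemma pd_contDiff {f : ℝ × ℝ → ℝ} (hf : ContDiff ℝ (⊤ : ℕ∞) f) (v : ℝ × ℝ) :
    ContDiff ℝ (⊤ : ℕ∞) (fun p => fderiv ℝ f p v) :=
  (ContinuousLinearMap.apply ℝ ℝ v).contDiff.comp (hf.fderiv_right (by simp))

private lemma slice_x {f : ℝ × ℝ → ℝ} (hf : Differentiable ℝ f) (t x : ℝ) :
    HasDerivAt (fun y => f (t, y)) (fderiv ℝ f (t, x) (0, 1)) x := by
  have h : HasDerivAt (fun y : ℝ => ((t, y) : ℝ × ℝ)) ((0 : ℝ), (1 : ℝ)) x :=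
    HasDerivAt.prodMk (hasDerivAt_const x t) (hasDerivAt_id x)
  exact (hf (t, x)).hasFDerivAt.comp_hasDerivAt x h

private lemma slice_t {f : ℝ × ℝ → ℝ} (hf : Differentiable ℝ f) (t x : ℝ) :
    HasDerivAt (fun s => f (s, x)) (fderiv ℝ f (t, x) (1, 0)) t := by
  have h : HasDerivAt (fun s : ℝ => ((s, x) : ℝ × ℝ)) ((1 : ℝ), (0 : ℝ)) t :=
    HasDerivAt.prodMk (hasDerivAt_id t) (hasDerivAt_const t x)
  exact (hf (t, x)).hasFDerivAt.comp_hasDerivAt t h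

private lemma pd_comm {f : ℝ × ℝ → ℝ} (hf : ContDiff ℝ (⊤ : ℕ∞) f) (p v w : ℝ × ℝ) :
    fderiv ℝ (fun q => fderiv ℝ f q v) p w = fderiv ℝ (fun q => fderiv ℝ f q w) p v := by
  have hd : Differentiable ℝ (fderiv ℝ f) := (hf.fderiv_right (m := (⊤ : ℕ∞)) (by simp)).differentiable (by simp)
  have h1 : ∀ v : ℝ × ℝ, fderiv ℝ (fun q => fderiv ℝ f q v) p =
      (ContinuousLinearMap.apply ℝ ℝ v).comp (fderiv ℝ (fderiv ℝ f) p) := fun v =>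
    (((ContinuousLinearMap.apply ℝ ℝ v).hasFDerivAt).comp p (hd p).hasFDerivAt).fderiv
  have hsymm := second_derivative_symmetric
    (fun y => (hf.differentiable (by simp) y).hasFDerivAt) (hd p).hasFDerivAt w v
  rw [h1, h1]
  simpa using hsymm

/-- Converse direction of the Cole-Hopf transform: if `ψ = -2 μ^{-1/2} ∂ₓ u / u`
satisfies Burgers' equation, then `u² (∂ₜψ + ψ∂ₓψ - μ^{-1/2}∂ₓ²ψ)` equals
`-2 μ^{-1/2} (u ∂ₓ(∂ₜu - μ^{-1/2}∂ₓ²u) - ∂ₓu (∂ₜu - μ^{-1/2}∂ₓ²u))`; in particular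
`g = (∂ₜ u - μ^{-1/2} ∂ₓ² u)/u` satisfies `∂ₓ g = 0`. -/
theorem cole_hopf_burgers_to_heat
    (μ : ℝ) (hμ : 0 < μ) (u ψ : ℝ × ℝ → ℝ)
    (hu : ContDiff ℝ (⊤ : ℕ∞) u) (hupos : ∀ p : ℝ × ℝ, 0 < u p)
    (hψ : ∀ t x : ℝ,
      ψ (t, x) = -2 * (Real.sqrt μ)⁻¹ * deriv (fun y => u (t, y)) x / u (t, x))
    (burgers : ∀ t x : ℝ,
      deriv (fun s => ψ (s, x)) t + ψ (t, x) * deriv (fun y => ψ (t, y)) x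
        = (Real.sqrt μ)⁻¹ * deriv (fun y => deriv (fun z => ψ (t, z)) y) x) :
    (∀ t x : ℝ,
      (u (t, x))^2 *
        (deriv (fun s => ψ (s, x)) t + ψ (t, x) * deriv (fun y => ψ (t, y)) x
          - (Real.sqrt μ)⁻¹ * deriv (fun y => deriv (fun z => ψ (t, z)) y) x)
        = -2 * (Real.sqrt μ)⁻¹ *
          (u (t, x) *
              deriv (fun y => deriv (fun s => u (s, y)) t
                - (Real.sqrt μ)⁻¹ * deriv (fun z => deriv (fun z' => u (t, z')) z) y) x
            - deriv (fun y => u (t, y)) x *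
              (deriv (fun s => u (s, x)) t
                - (Real.sqrt μ)⁻¹ * deriv (fun y => deriv (fun z => u (t, z)) y) x))) ∧
    (∀ t x : ℝ,
      deriv (fun y =>
        (deriv (fun s => u (s, y)) t
          - (Real.sqrt μ)⁻¹ * deriv (fun z => deriv (fun z' => u (t, z')) z) y)
          / u (t, y)) x = 0) := by
  have hsμ : Real.sqrt μ ≠ 0 := ne_of_gt (Real.sqrt_pos.2 hμ)
  set ν : ℝ := (Real.sqrt μ)⁻¹ with hνdef
  have hν0 : ν ≠ 0 := inv_ne_zero hsμ
  have hud : Differentiable ℝ u := hu.differentiable (by simp)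
  set P : ℝ × ℝ → ℝ := fun p => fderiv ℝ u p (0, 1) with hPdef
  set Q : ℝ × ℝ → ℝ := fun p => fderiv ℝ u p (1, 0) with hQdef
  have hPc : ContDiff ℝ (⊤ : ℕ∞) P := pd_contDiff hu _
  have hQc : ContDiff ℝ (⊤ : ℕ∞) Q := pd_contDiff hu _
  set R : ℝ × ℝ → ℝ := fun p => fderiv ℝ P p (0, 1) with hRdef
  set S : ℝ × ℝ → ℝ := fun p => fderiv ℝ Q p (0, 1) with hSdef
  have hRc : ContDiff ℝ (⊤ : ℕ∞) R := pd_contDiff hPc _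
  set T : ℝ × ℝ → ℝ := fun p => fderiv ℝ R p (0, 1) with hTdef
  have hne : ∀ t x : ℝ, u (t, x) ≠ 0 := fun t x => ne_of_gt (hupos (t, x))
  have hux : ∀ t x : ℝ, HasDerivAt (fun y => u (t, y)) (P (t, x)) x :=
    fun t x => slice_x hud t x
  have hut : ∀ t x : ℝ, HasDerivAt (fun s => u (s, x)) (Q (t, x)) t :=
    fun t x => slice_t hud t x
  have hPx : ∀ t x : ℝ, HasDerivAt (fun y => P (t, y)) (R (t, x)) x :=
    fun t x => slice_x (hPc.differentiable (by simp)) t x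
  have hQx : ∀ t x : ℝ, HasDerivAt (fun y => Q (t, y)) (S (t, x)) x :=
    fun t x => slice_x (hQc.differentiable (by simp)) t x
  have hRx : ∀ t x : ℝ, HasDerivAt (fun y => R (t, y)) (T (t, x)) x :=
    fun t x => slice_x (hRc.differentiable (by simp)) t x
  have hPt : ∀ t x : ℝ, HasDerivAt (fun s => P (s, x)) (S (t, x)) t := by
    intro t x
    have h := slice_t (hPc.differentiable (by simp)) t x
    have hc : fderiv ℝ P (t, x) (1, 0) = S (t, x) := by
      rw [hSdef, hQdef, hPdef]
      exact pd_comm hu (t, x) (0, 1) (1, 0)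
    rwa [hc] at h
  have hψ' : ∀ t x : ℝ, ψ (t, x) = -2 * ν * P (t, x) / u (t, x) := by
    intro t x
    rw [hψ t x, (hux t x).deriv]
  -- derivative of ψ in x
  have hψx : ∀ t x : ℝ, HasDerivAt (fun y => ψ (t, y))
      ((-2 * ν * R (t, x) * u (t, x) - -2 * ν * P (t, x) * P (t, x)) / u (t, x) ^ 2) x := by
    intro t x
    have hfun : (fun y => ψ (t, y)) = fun y => -2 * ν * P (t, y) / u (t, y) :=
      funext fun y => hψ' t y
    rw [hfun]
    exact ((hPx t x).const_mul (-2 * ν)).div (hux t x) (hne t x)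
  -- derivative of ψ in t
  have hψt : ∀ t x : ℝ, HasDerivAt (fun s => ψ (s, x))
      ((-2 * ν * S (t, x) * u (t, x) - -2 * ν * P (t, x) * Q (t, x)) / u (t, x) ^ 2) t := by
    intro t x
    have hfun : (fun s => ψ (s, x)) = fun s => -2 * ν * P (s, x) / u (s, x) :=
      funext fun s => hψ' s x
    rw [hfun]
    exact ((hPt t x).const_mul (-2 * ν)).div (hut t x) (hne t x)
  -- the x-derivative of ψ as a function of y
  have e1 : ∀ t : ℝ, (fun y => deriv (fun z => ψ (t, z)) y)
      = fun y => (-2 * ν * R (t, y) * u (t, y) - -2 * ν * P (t, y) * P (t, y)) / u (t, y) ^ 2 :=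
    fun t => funext fun y => (hψx t y).deriv
  have hψxx : ∀ t x : ℝ, HasDerivAt
      (fun y => (-2 * ν * R (t, y) * u (t, y) - -2 * ν * P (t, y) * P (t, y)) / u (t, y) ^ 2)
      (((-2 * ν * T (t, x) * u (t, x) + -2 * ν * R (t, x) * P (t, x)
          - (-2 * ν * R (t, x) * P (t, x) + -2 * ν * P (t, x) * R (t, x))) * u (t, x) ^ 2
        - (-2 * ν * R (t, x) * u (t, x) - -2 * ν * P (t, x) * P (t, x))
            * (2 * u (t, x) ^ 1 * P (t, x))) / (u (t, x) ^ 2) ^ 2) x := by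
    intro t x
    have hnum : HasDerivAt
        (fun y => -2 * ν * R (t, y) * u (t, y) - -2 * ν * P (t, y) * P (t, y))
        (-2 * ν * T (t, x) * u (t, x) + -2 * ν * R (t, x) * P (t, x)
          - (-2 * ν * R (t, x) * P (t, x) + -2 * ν * P (t, x) * R (t, x))) x :=
      (((hRx t x).const_mul (-2 * ν)).mul (hux t x)).sub
        (((hPx t x).const_mul (-2 * ν)).mul (hPx t x))
    have hden : HasDerivAt (fun y => u (t, y) ^ 2) (2 * u (t, x) ^ 1 * P (t, x)) x := by
      have h : HasDerivAt (fun y => u (t, y) ^ 2) _ x := (hux t x).pow 2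
      simpa using h
    exact hnum.div hden (pow_ne_zero 2 (hne t x))
  have e2 : ∀ t : ℝ, (fun y => deriv (fun z => u (t, z)) y) = fun y => P (t, y) :=
    fun t => funext fun y => (hux t y).deriv
  have e3 : ∀ t : ℝ, (fun y => deriv (fun s => u (s, y)) t
        - ν * deriv (fun z => deriv (fun z' => u (t, z')) z) y)
      = fun y => Q (t, y) - ν * R (t, y) := by
    intro t
    funext y
    rw [(hut t y).deriv, e2 t, (hPx t y).deriv]
  have part1 : ∀ t x : ℝ,
      (u (t, x))^2 *
        (deriv (fun s => ψ (s, x)) t + ψ (t, x) * deriv (fun y => ψ (t, y)) x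
          - ν * deriv (fun y => deriv (fun z => ψ (t, z)) y) x)
        = -2 * ν *
          (u (t, x) *
              deriv (fun y => deriv (fun s => u (s, y)) t
                - ν * deriv (fun z => deriv (fun z' => u (t, z')) z) y) x
            - deriv (fun y => u (t, y)) x *
              (deriv (fun s => u (s, x)) t
                - ν * deriv (fun y => deriv (fun z => u (t, z)) y) x)) := by
    intro t x
    rw [e1 t, (hψxx t x).deriv, e3 t, (show HasDerivAt (fun y => Q (t, y) - ν * R (t, y)) _ x from (hQx t x).sub ((hRx t x).const_mul ν)).deriv,
      (hψt t x).deriv, (hψx t x).deriv, hψ' t x, (hux t x).deriv, (hut t x).deriv,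
      e2 t, (hPx t x).deriv]
    field_simp [hne t x]
    ring
  refine ⟨part1, fun t x => ?_⟩
  -- derive the key vanishing from Burgers and part1
  have hb := burgers t x
  have h1 := part1 t x
  have hz : deriv (fun s => ψ (s, x)) t + ψ (t, x) * deriv (fun y => ψ (t, y)) x
      - ν * deriv (fun y => deriv (fun z => ψ (t, z)) y) x = 0 := by
    rw [hb]; ring
  rw [hz, mul_zero] at h1
  have h2 : u (t, x) * (S (t, x) - ν * T (t, x))
      - P (t, x) * (Q (t, x) - ν * R (t, x)) = 0 := by
    rw [e3 t, (show HasDerivAt (fun y => Q (t, y) - ν * R (t, y)) _ x from (hQx t x).sub ((hRx t x).const_mul ν)).deriv, (hux t x).deriv,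
      (hut t x).deriv, e2 t, (hPx t x).deriv] at h1
    rcases mul_eq_zero.mp h1.symm with h | h
    · exact absurd h (by simp [hν0])
    · exact h
  have e4 : (fun y => (deriv (fun s => u (s, y)) t
        - ν * deriv (fun z => deriv (fun z' => u (t, z')) z) y) / u (t, y))
      = fun y => (Q (t, y) - ν * R (t, y)) / u (t, y) := by
    funext y
    rw [(hut t y).deriv, e2 t, (hPx t y).deriv]
  rw [e4,
    (show HasDerivAt (fun y => (Q (t, y) - ν * R (t, y)) / u (t, y))
      (((S (t, x) - ν * T (t, x)) * u (t, x) - (Q (t, x) - ν * R (t, x)) * P (t, x)) / u (t, x) ^ 2) x from ((hQx t x).sub ((hRx t x).const_mul ν)).div (hux t x) (hne t x)).deriv]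
  rw [div_eq_zero_iff]
  left
  linarith [h2]
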